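/- Let v be any 012-string of length n with a zeros, b−a ones, and n−b twos, and let 𝟎 = (0^a, 1^{b−a}, 2^{n−b}). Then there exists a unique triangular puzzle with labels 𝟎 on the left border and v on the right border (both read clockwise), and the bottom border labels of this unique puzzle equal v read counter-clockwise. -/

import Mathlib

/-- The eight puzzle pieces, as clockwise triples of edge labels. -/
def puzzleBase : List (ℕ × ℕ × ℕ) :=
  [(0,0,0),(1,1,1),(2,2,2),(3,1,0),(4,2,1),(5,2,0),(6,2,3),(7,4,0)]

/-- Cyclic rotation of a triple (rotating the triangle). -/
def rot3 (t : ℕ × ℕ × ℕ) : ℕ × ℕ × ℕ := (t.2.2, t.1, t.2.1)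

/-- A triple of labels, read clockwise, is an allowed puzzle piece (rotations allowed). -/
def IsPiece (t : ℕ × ℕ × ℕ) : Prop :=
  t ∈ puzzleBase ∨ rot3 t ∈ puzzleBase ∨ rot3 (rot3 t) ∈ puzzleBase

/-- A triangular puzzle of size n: upward triangles (i,j) for j ≤ i < n with edges
(L i j, R i j, B i j) and downward triangles with clockwise edges
(B (i-1) j, L i (j+1), R i j) for j < i < n. -/
def IsTriPuzzle (n : ℕ) (L R B : ℕ → ℕ → ℕ) : Prop :=
  (∀ i j, j ≤ i → i < n → IsPiece (L i j, R i j, B i j)) ∧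
  (∀ i j, j < i → i < n → IsPiece (B (i-1) j, L i (j+1), R i j))

/-- The left border read clockwise (bottom-to-top). -/
def triLeftCW (n : ℕ) (L : ℕ → ℕ → ℕ) : List ℕ :=
  List.ofFn (fun i : Fin n => L (n - 1 - (i : ℕ)) 0)

/-- The right border read clockwise (top-to-bottom). -/
def triRightCW (n : ℕ) (R : ℕ → ℕ → ℕ) : List ℕ :=
  List.ofFn (fun i : Fin n => R (i : ℕ) (i : ℕ))

/-- The bottom border read counter-clockwise (left-to-right). -/
def triBottomCCW (n : ℕ) (B : ℕ → ℕ → ℕ) : List ℕ :=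
  List.ofFn (fun j : Fin n => B (n - 1) (j : ℕ))

/-- Normalization: all labels outside the domain are 0 (so that puzzles can be counted). -/
def TriNormalized (n : ℕ) (L R B : ℕ → ℕ → ℕ) : Prop :=
  ∀ i j, ¬(j ≤ i ∧ i < n) → L i j = 0 ∧ R i j = 0 ∧ B i j = 0

/-- C^w_{u,v}: the number of triangular puzzles with left border u (clockwise),
right border v (clockwise) and bottom border w (counter-clockwise). -/
noncomputable def puzzleCount (n : ℕ) (u v w : List ℕ) : ℕ :=
  Set.ncard { T : (ℕ → ℕ → ℕ) × (ℕ → ℕ → ℕ) × (ℕ → ℕ → ℕ) |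
    IsTriPuzzle n T.1 T.2.1 T.2.2 ∧ TriNormalized n T.1 T.2.1 T.2.2 ∧
    triLeftCW n T.1 = u ∧ triRightCW n T.2.1 = v ∧ triBottomCCW n T.2.2 = w }

/-- The identity 012-string 𝟎 = (0^a, 1^{b-a}, 2^{n-b}) for Fl(a,b;n). -/
def idString (a b n : ℕ) : List ℕ :=
  List.replicate a 0 ++ List.replicate (b - a) 1 ++ List.replicate (n - b) 2

/-- A 012-string for the flag variety Fl(a,b;n). -/
def Is012For (a b n : ℕ) (u : List ℕ) : Prop :=
  u.length = n ∧ u.count 0 = a ∧ u.count 1 = b - a ∧ u.count 2 = n - b ∧ ∀ x ∈ u, x ≤ 2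

/-!
Every upward triangle `(i, j)` of the identity puzzle is a crossing of the label `l` entering it
from the left with the label `x = v[j]` of its column: its right and bottom edges are
`crossRight l x` and `crossBottom l x`, the first being `x` when `x ≤ l`, the second when `l ≤ x`.
The label entering `(i, j)` has the closed form `rowLabel`: it is `≥ 1` iff
`a ≤ (n - 1 - i) + #0(v[0, j))` and `= 2` iff `b ≤ (n - 1 - i) + #0(v[0, j)) + #1(v[0, j))`.
It is therefore `≥ v[i]` on the diagonal and `≤ v[j]` in the last row, which makes both the
right and the bottom border equal to `v`.

Uniqueness goes row by row. Once the row above is known, the labels around each downward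
triangle form an `Admissible` configuration, on which the edge shared with the upward triangle
to its left is forced; sweeping from the left border to the right then fills the whole row.
-/

instance : DecidablePred IsPiece := fun t => by unfold IsPiece; infer_instance

lemma IsPiece.mid_unique {p q q' r : ℕ} (h : IsPiece (p, q, r)) (h' : IsPiece (p, q', r)) :
    q = q' := by
  simp only [IsPiece, puzzleBase, List.mem_cons, Prod.mk.injEq, List.not_mem_nil, or_false,
    rot3] at h h'
  omega

lemma IsPiece.last_unique {p q r r' : ℕ} (h : IsPiece (p, q, r)) (h' : IsPiece (p, q, r')) :
    r = r' := by
  simp only [IsPiece, puzzleBase, List.mem_cons, Prod.mk.injEq, List.not_mem_nil, or_false,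
    rot3] at h h'
  omega

lemma List.ofFn_eq_iff_getD {α : Type*} {n : ℕ} (f : Fin n → α) (u : List α) (d : α) :
    List.ofFn f = u ↔ u.length = n ∧ ∀ i : Fin n, f i = u.getD i d := by
  constructor
  · rintro rfl
    exact ⟨List.length_ofFn, fun i => by simp⟩
  · rintro ⟨hlen, hf⟩
    refine List.ext_getElem (by simp [hlen]) fun i h₁ h₂ => ?_
    simp only [List.getElem_ofFn, hf, List.getD_eq_getElem _ _ h₂]

lemma List.count_take_add_one (v : List ℕ) (x : ℕ) {j : ℕ} (hj : j < v.length) :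
    (v.take (j + 1)).count x = (v.take j).count x + if v.getD j 0 = x then 1 else 0 := by
  rw [List.take_add_one, List.getElem?_eq_getElem hj, List.getD_eq_getElem v 0 hj,
    List.count_append, Option.toList_some, List.count_singleton']

lemma List.count_zero_add_count_one_add_count_two {l : List ℕ} (h : ∀ x ∈ l, x ≤ 2) :
    l.count 0 + l.count 1 + l.count 2 = l.length := by
  induction l with
  | nil => rfl
  | cons y l ih =>
    have hy : y ≤ 2 := h y List.mem_cons_self
    have hl := ih fun x hx => h x (List.mem_cons_of_mem y hx)
    interval_cases y <;> simp only [List.count_cons, List.length_cons] <;> grind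

lemma triLeftCW_eq_iff {n : ℕ} {L : ℕ → ℕ → ℕ} {u : List ℕ} :
    triLeftCW n L = u ↔ u.length = n ∧ ∀ i < n, L i 0 = u.getD (n - 1 - i) 0 := by
  rw [triLeftCW, List.ofFn_eq_iff_getD _ u 0]
  refine and_congr_right fun _ => ⟨fun h i hi => ?_, fun h k => ?_⟩
  · simpa [show n - 1 - (n - 1 - i) = i by omega] using h ⟨n - 1 - i, by omega⟩
  · exact h _ (by omega) |>.trans (by rw [show n - 1 - (n - 1 - (k : ℕ)) = k by omega])

lemma triRightCW_eq_iff {n : ℕ} {R : ℕ → ℕ → ℕ} {u : List ℕ} :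
    triRightCW n R = u ↔ u.length = n ∧ ∀ i < n, R i i = u.getD i 0 := by
  rw [triRightCW, List.ofFn_eq_iff_getD _ u 0, Fin.forall_iff]

lemma triBottomCCW_eq_iff {n : ℕ} {B : ℕ → ℕ → ℕ} {u : List ℕ} :
    triBottomCCW n B = u ↔ u.length = n ∧ ∀ j < n, B (n - 1) j = u.getD j 0 := by
  rw [triBottomCCW, List.ofFn_eq_iff_getD _ u 0, Fin.forall_iff]

lemma idString_getD {a b n k : ℕ} (hk : k < n) :
    (idString a b n).getD k 0 = if k < a then 0 else if k < b then 1 else 2 := by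
  simp only [idString, List.append_assoc, List.getD_eq_getElem?_getD, List.getElem?_append,
    List.length_replicate, List.getElem?_replicate]
  split_ifs <;> first | rfl | omega

lemma idString_length {a b n : ℕ} (hab : a ≤ b) (hbn : b ≤ n) :
    (idString a b n).length = n := by
  simp only [idString, List.length_append, List.length_replicate]
  omega

section
variable {a b n : ℕ} {v : List ℕ}

lemma Is012For.getD_le_two (hv : Is012For a b n v) {j : ℕ} (hj : j < n) : v.getD j 0 ≤ 2 := by
  rw [← hv.1] at hj
  rw [List.getD_eq_getElem v 0 hj]
  exact hv.2.2.2.2 _ (List.getElem_mem hj)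

lemma Is012For.count_take_le (hv : Is012For a b n v) (j : ℕ) :
    (v.take j).count 0 ≤ a ∧ (v.take j).count 1 ≤ b - a ∧ (v.take j).count 2 ≤ n - b := by
  obtain ⟨-, h₀, h₁, h₂, -⟩ := hv
  have hsub := List.take_sublist j v
  exact ⟨h₀ ▸ hsub.count_le 0, h₁ ▸ hsub.count_le 1, h₂ ▸ hsub.count_le 2⟩

end

namespace IdentityPuzzle

def crossRight : ℕ → ℕ → ℕ
  | 0, 1 => 3 | 0, 2 => 5 | 1, 1 => 1 | 1, 2 => 4 | 2, 1 => 1 | 2, 2 => 2 | _, _ => 0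

def crossBottom : ℕ → ℕ → ℕ
  | 0, 1 => 1 | 0, 2 => 2 | 1, 0 => 3 | 1, 1 => 1 | 1, 2 => 2
  | 2, 0 => 5 | 2, 1 => 4 | 2, 2 => 2 | _, _ => 0

lemma isPiece_cross {l x : ℕ} (hl : l ≤ 2) (hx : x ≤ 2) :
    IsPiece (l, crossRight l x, crossBottom l x) := by
  interval_cases l <;> interval_cases x <;> decide

lemma crossRight_of_le {l x : ℕ} (h : x ≤ l) (hl : l ≤ 2) : crossRight l x = x := by
  interval_cases l <;> interval_cases x <;> rfl

lemma crossBottom_of_le {l x : ℕ} (h : l ≤ x) (hx : x ≤ 2) : crossBottom l x = x := by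
  interval_cases x <;> interval_cases l <;> rfl

/-- The configurations met at the downward triangles of the identity puzzle: `l₀` enters the
upward triangle above, `l₁` the upward triangle to the left, and `x` is the column label. -/
def Admissible (l₀ l₁ x : ℕ) : Prop :=
  l₁ ≤ l₀ ∧ l₀ ≤ 2 ∧ x ≤ 2 ∧ ¬(l₀ = 2 ∧ l₁ = 0 ∧ x = 1)

def downLabel (l₀ l₁ x : ℕ) : ℕ := if x = 0 ∨ (x = 1 ∧ l₀ = 2) then l₀ else l₁

section
variable {l₀ l₁ x : ℕ}

lemma Admissible.isPiece_down (h : Admissible l₀ l₁ x) :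
    IsPiece (crossBottom l₀ x, downLabel l₀ l₁ x, crossRight l₁ x) := by
  obtain ⟨h₁₀, h₀, hx, hex⟩ := h
  interval_cases l₀ <;> interval_cases l₁ <;> interval_cases x <;> simp_all <;> decide

lemma Admissible.eq_cross {r c d : ℕ} (h : Admissible l₀ l₁ x) (hup : IsPiece (l₁, r, c))
    (hdown : IsPiece (crossBottom l₀ x, d, r)) :
    r = crossRight l₁ x ∧ d = downLabel l₀ l₁ x := by
  have hr : r = crossRight l₁ x := by
    obtain ⟨h₁₀, h₀, hx, hex⟩ := h
    simp only [IsPiece, puzzleBase, List.mem_cons, Prod.mk.injEq, List.not_mem_nil, or_false,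
      rot3] at hup hdown
    interval_cases l₀ <;> interval_cases l₁ <;> interval_cases x <;>
      simp only [crossBottom, crossRight] at hdown ⊢ <;> omega
  rw [hr] at hdown
  exact ⟨hr, hdown.mid_unique h.isPiece_down⟩

end

section
variable (a b n : ℕ) (v : List ℕ)

def rowLabel (i j : ℕ) : ℕ :=
  if b + i < n + (v.take j).count 0 + (v.take j).count 1 then 2
  else if a + i < n + (v.take j).count 0 then 1 else 0

def idPuzzleR (i j : ℕ) : ℕ := crossRight (rowLabel a b n v i j) (v.getD j 0)

def idPuzzleB (i j : ℕ) : ℕ := crossBottom (rowLabel a b n v i j) (v.getD j 0)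

lemma rowLabel_le_two (i j : ℕ) : rowLabel a b n v i j ≤ 2 := by
  unfold rowLabel
  split_ifs <;> omega

lemma rowLabel_succ_le (i j : ℕ) : rowLabel a b n v (i + 1) j ≤ rowLabel a b n v i j := by
  unfold rowLabel
  split_ifs <;> omega

lemma rowLabel_succ_succ (i : ℕ) {j : ℕ} (hj : j < v.length) :
    rowLabel a b n v (i + 1) (j + 1) =
      downLabel (rowLabel a b n v i j) (rowLabel a b n v (i + 1) j) (v.getD j 0) := by
  unfold rowLabel downLabel
  rw [v.count_take_add_one 0 hj, v.count_take_add_one 1 hj]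
  split_ifs <;> omega

end

section
variable {a b n : ℕ} {v : List ℕ}

lemma rowLabel_zero (hab : a ≤ b) {i : ℕ} (hi : i < n) :
    rowLabel a b n v i 0 = (idString a b n).getD (n - 1 - i) 0 := by
  rw [idString_getD (by omega)]
  simp only [rowLabel, List.take_zero, List.count_nil, add_zero]
  split_ifs <;> omega

lemma admissible_rowLabel (hv : Is012For a b n v) (i : ℕ) {j : ℕ} (hj : j < n) :
    Admissible (rowLabel a b n v i j) (rowLabel a b n v (i + 1) j) (v.getD j 0) := by
  refine ⟨rowLabel_succ_le .., rowLabel_le_two .., hv.getD_le_two hj, ?_⟩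
  rintro ⟨h₂, h₀, hx⟩
  have h₁ := (hv.count_take_le (j + 1)).2.1
  rw [v.count_take_add_one 1 (hv.1 ▸ hj), hx, if_pos rfl] at h₁
  unfold rowLabel at h₂ h₀
  split_ifs at h₂ h₀ <;> omega

lemma getD_le_rowLabel (hab : a ≤ b) (hbn : b ≤ n) (hv : Is012For a b n v) {i : ℕ}
    (hi : i < n) : v.getD i 0 ≤ rowLabel a b n v i i := by
  have hi' : i < v.length := hv.1 ▸ hi
  have hsum := List.count_zero_add_count_one_add_count_two fun x hx =>
    hv.2.2.2.2 x (List.mem_of_mem_take (l := v) (i := i + 1) hx)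
  obtain ⟨-, h₁, h₂⟩ := hv.count_take_le (i + 1)
  rw [List.length_take_of_le hi'] at hsum
  simp only [v.count_take_add_one _ hi'] at hsum h₁ h₂
  have hx := hv.getD_le_two hi
  unfold rowLabel
  split_ifs at hsum h₁ h₂ ⊢ <;> omega

lemma rowLabel_last_le (hab : a ≤ b) (hv : Is012For a b n v) {j : ℕ} (hj : j < n) :
    rowLabel a b n v (n - 1) j ≤ v.getD j 0 := by
  obtain ⟨h₀, h₁, -⟩ := hv.count_take_le (j + 1)
  simp only [v.count_take_add_one _ (hv.1 ▸ hj)] at h₀ h₁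
  have hx := hv.getD_le_two hj
  unfold rowLabel
  split_ifs at h₀ h₁ ⊢ <;> omega

lemma isTriPuzzle_idPuzzle (hv : Is012For a b n v) :
    IsTriPuzzle n (rowLabel a b n v) (idPuzzleR a b n v) (idPuzzleB a b n v) := by
  refine ⟨fun i j _ hi => isPiece_cross (rowLabel_le_two ..) (hv.getD_le_two (by omega)),
    fun i j hj hi => ?_⟩
  obtain ⟨k, rfl⟩ : ∃ k, i = k + 1 := ⟨i - 1, by omega⟩
  rw [Nat.add_sub_cancel, rowLabel_succ_succ a b n v k (by rw [hv.1]; omega)]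
  exact (admissible_rowLabel hv k (by omega)).isPiece_down

lemma triLeftCW_rowLabel (hab : a ≤ b) (hbn : b ≤ n) :
    triLeftCW n (rowLabel a b n v) = idString a b n :=
  triLeftCW_eq_iff.2 ⟨idString_length hab hbn, fun _ hi => rowLabel_zero hab hi⟩

lemma triRightCW_idPuzzleR (hab : a ≤ b) (hbn : b ≤ n) (hv : Is012For a b n v) :
    triRightCW n (idPuzzleR a b n v) = v :=
  triRightCW_eq_iff.2 ⟨hv.1, fun _ hi =>
    crossRight_of_le (getD_le_rowLabel hab hbn hv hi) (rowLabel_le_two ..)⟩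

lemma idPuzzleB_last (hab : a ≤ b) (hv : Is012For a b n v) {j : ℕ} (hj : j < n) :
    idPuzzleB a b n v (n - 1) j = v.getD j 0 :=
  crossBottom_of_le (rowLabel_last_le hab hv hj) (hv.getD_le_two hj)

variable {L R B : ℕ → ℕ → ℕ}

lemma _root_.IsTriPuzzle.eq_idPuzzleB (hp : IsTriPuzzle n L R B) (hv : Is012For a b n v)
    {i j : ℕ} (hj : j ≤ i) (hi : i < n) (hL : L i j = rowLabel a b n v i j)
    (hR : R i j = idPuzzleR a b n v i j) : B i j = idPuzzleB a b n v i j := by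
  have hup := hp.1 i j hj hi
  rw [hL, hR] at hup
  exact hup.last_unique (isPiece_cross (rowLabel_le_two ..) (hv.getD_le_two (by omega)))

lemma _root_.IsTriPuzzle.eq_idPuzzle_of_above (hp : IsTriPuzzle n L R B)
    (hv : Is012For a b n v) {k j : ℕ} (hj : j ≤ k) (hk : k + 1 < n)
    (hB : B k j = idPuzzleB a b n v k j) (hL : L (k + 1) j = rowLabel a b n v (k + 1) j) :
    R (k + 1) j = idPuzzleR a b n v (k + 1) j ∧
      L (k + 1) (j + 1) = rowLabel a b n v (k + 1) (j + 1) := by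
  have hup := hp.1 (k + 1) j (by omega) hk
  have hdown := hp.2 (k + 1) j (by omega) hk
  rw [Nat.add_sub_cancel, hB] at hdown
  rw [hL] at hup
  rw [rowLabel_succ_succ a b n v k (by rw [hv.1]; omega)]
  exact (admissible_rowLabel hv k (by omega)).eq_cross hup hdown

theorem _root_.IsTriPuzzle.eq_idPuzzle (hab : a ≤ b) (hbn : b ≤ n) (hv : Is012For a b n v)
    (hp : IsTriPuzzle n L R B) (hL : triLeftCW n L = idString a b n)
    (hR : triRightCW n R = v) {i : ℕ} (hi : i < n) {j : ℕ} (hj : j ≤ i) :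
    L i j = rowLabel a b n v i j ∧ R i j = idPuzzleR a b n v i j ∧
      B i j = idPuzzleB a b n v i j := by
  have hleft : ∀ i < n, L i 0 = rowLabel a b n v i 0 := fun i hi =>
    ((triLeftCW_eq_iff.1 hL).2 i hi).trans (rowLabel_zero hab hi).symm
  have hright : ∀ i < n, R i i = idPuzzleR a b n v i i := fun i hi =>
    ((triRightCW_eq_iff.1 hR).2 i hi).trans
      ((triRightCW_eq_iff.1 (triRightCW_idPuzzleR hab hbn hv)).2 i hi).symm
  induction i generalizing j with
  | zero =>
    obtain rfl : j = 0 := by omega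
    exact ⟨hleft 0 hi, hright 0 hi, hp.eq_idPuzzleB hv le_rfl hi (hleft 0 hi) (hright 0 hi)⟩
  | succ k ih =>
    have hrow : ∀ j ≤ k + 1, L (k + 1) j = rowLabel a b n v (k + 1) j := by
      intro j hj
      induction j with
      | zero => exact hleft _ hi
      | succ j ihj =>
        exact (hp.eq_idPuzzle_of_above hv (by omega) hi (ih (by omega) (by omega)).2.2
          (ihj (by omega))).2
    have hRj : R (k + 1) j = idPuzzleR a b n v (k + 1) j := by
      rcases hj.lt_or_eq with hj | rfl
      · exact (hp.eq_idPuzzle_of_above hv (by omega) hi (ih (by omega) (by omega)).2.2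
          (hrow j hj.le)).1
      · exact hright _ hi
    exact ⟨hrow j hj, hRj, hp.eq_idPuzzleB hv hj hi (hrow j hj) hRj⟩

end

end IdentityPuzzle

open IdentityPuzzle in
/-- For any 012-string v for Fl(a,b;n) there is a unique triangular puzzle with left
border 𝟎 and right border v (both clockwise), and its bottom border (read
counter-clockwise) is v. -/
theorem unique_identity_puzzle (n a b : ℕ) (hab : a ≤ b) (hbn : b ≤ n)
    (v : List ℕ) (hv : Is012For a b n v) :
    (∃ L R B, IsTriPuzzle n L R B ∧
      triLeftCW n L = idString a b n ∧ triRightCW n R = v) ∧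
    (∀ L R B L' R' B', IsTriPuzzle n L R B →
      triLeftCW n L = idString a b n → triRightCW n R = v →
      IsTriPuzzle n L' R' B' →
      triLeftCW n L' = idString a b n → triRightCW n R' = v →
      ∀ i j, j ≤ i → i < n → L i j = L' i j ∧ R i j = R' i j ∧ B i j = B' i j) ∧
    (∀ L R B, IsTriPuzzle n L R B →
      triLeftCW n L = idString a b n → triRightCW n R = v →
      triBottomCCW n B = v) := by
  refine ⟨⟨_, _, _, isTriPuzzle_idPuzzle hv, triLeftCW_rowLabel hab hbn,
    triRightCW_idPuzzleR hab hbn hv⟩, ?_, ?_⟩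
  · intro L R B L' R' B' hp hL hR hp' hL' hR' i j hj hi
    obtain ⟨hL₁, hR₁, hB₁⟩ := hp.eq_idPuzzle hab hbn hv hL hR hi hj
    obtain ⟨hL₂, hR₂, hB₂⟩ := hp'.eq_idPuzzle hab hbn hv hL' hR' hi hj
    exact ⟨hL₁.trans hL₂.symm, hR₁.trans hR₂.symm, hB₁.trans hB₂.symm⟩
  · intro L R B hp hL hR
    refine triBottomCCW_eq_iff.2 ⟨hv.1, fun j hj => ?_⟩
    rw [(hp.eq_idPuzzle hab hbn hv hL hR (by omega) (by omega : j ≤ n - 1)).2.2]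
    exact idPuzzleB_last hab hv hj
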